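/- Let $v : \mathbb{R}^n \to \mathbb{R}$ be convex and globally Lipschitz with constant $L$. For $y_0 \in \mathbb{R}^n$ and $h > 0$, let $S = \{y : v(y) < v(y_0) + p \cdot (y - y_0) + h\}$ be a section of $v$ with slope $p \in \partial^- v(y_0) + B_L(0)$ defined by an affine function supporting the section at height $h$, where $|p| \le L'$. If $S$ is balanced about $y_0$ with constant $C_n$ and there exists $R > 1$ with $v(y) > h + \sup_{B_1(y_0)} v$ for all $y \notin B_R(y_0)$, then $S \subset B_{3C_n R}(y_0)$. -/
import Mathlib


open scoped RealInnerProductSpace NNReal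

theorem stmt9 {n : ℕ} (v : EuclideanSpace ℝ (Fin n) → ℝ)
    (hv : ConvexOn ℝ Set.univ v)
    (L : ℝ≥0) (hlip : LipschitzWith L v)
    (y0 p : EuclideanSpace ℝ (Fin n)) (h L' : ℝ) (hh : 0 < h) (hp : ‖p‖ ≤ L')
    (S : Set (EuclideanSpace ℝ (Fin n)))
    (hS : S = {y | v y < v y0 + ⟪p, y - y0⟫ + h})
    (Cn : ℝ) (hCn : 1 ≤ Cn)
    (hbal : ∀ e : EuclideanSpace ℝ (Fin n), ‖e‖ = 1 → ∀ t : ℝ, 0 < t →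
      y0 + t • e ∈ S → ∀ s : ℝ, 0 < s → Cn * s < t → y0 - s • e ∈ S)
    (R : ℝ) (hR : 1 < R)
    (hout : ∀ y z, R < ‖y - y0‖ → ‖z - y0‖ < 1 → h + v z < v y) :
    S ⊆ Metric.ball y0 (3 * Cn * R) := by
  have hCn0 : (0:ℝ) < Cn := lt_of_lt_of_le one_pos hCn
  have hR0 : (0:ℝ) < R := lt_trans one_pos hR
  intro y hy
  by_contra hball
  rw [Metric.mem_ball, not_lt, dist_eq_norm] at hball
  set t := ‖y - y0‖ with ht
  have h3 : (0:ℝ) < 3 * Cn * R := by positivity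
  have htpos : 0 < t := lt_of_lt_of_le h3 hball
  have ht3 : 3 * Cn * R ≤ t := hball
  set e := t⁻¹ • (y - y0) with he
  have hne : ‖e‖ = 1 := by
    rw [he, norm_smul, norm_inv, Real.norm_eq_abs, abs_of_pos htpos, ← ht,
      inv_mul_cancel₀ htpos.ne']
  have hye : y0 + t • e = y := by
    rw [he, smul_smul, mul_inv_cancel₀ htpos.ne', one_smul]
    abel
  have key : ∀ w ∈ S, R < ‖w - y0‖ → ⟪p, w - y0⟫ ≤ 0 → False := by
    intro w hw hR' hp'
    have h1 := hout w y0 hR' (by simp)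
    rw [hS] at hw
    have h2 : v w < v y0 + ⟪p, w - y0⟫ + h := hw
    linarith
  have htR : R < t := by nlinarith
  rcases le_or_gt ⟪p, y - y0⟫ 0 with hle | hgt
  · exact key y hy htR hle
  · have hmem : y0 - (2 * R) • e ∈ S := by
      refine hbal e hne t htpos (hye ▸ hy) (2 * R) (by linarith) ?_
      nlinarith
    refine key _ hmem ?_ ?_
    · have : y0 - (2 * R) • e - y0 = -((2 * R) • e) := by abel
      rw [this, norm_neg, norm_smul, hne, mul_one, Real.norm_eq_abs,
        abs_of_pos (by linarith)]
      linarith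
    · have heq : y0 - (2 * R) • e - y0 = (-(2 * R)) • e := by
        rw [neg_smul]; abel
      rw [heq, inner_smul_right, he, inner_smul_right]
      have : 0 < t⁻¹ * ⟪p, y - y0⟫ := mul_pos (inv_pos.mpr htpos) hgt
      nlinarith
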